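/- arXiv:1912.04821 — 5 statements merged into one kernel-verified Lean document; each statement's English description precedes it below -/
import Mathlib

section
/- The Bott cocycle B(f₁, f₂) = (1/2)∫_{-L/2}^{L/2} [log f₂'(x)]' log[f₁'(f₂(x))] dx satisfies the group 2-cocycle identity B(f₁∘f₂, f₃) + B(f₁, f₂) = B(f₁, f₂∘f₃) + B(f₂, f₃) for all smooth f₁, f₂, f₃ : ℝ → ℝ with fᵢ' > 0 and fᵢ(x+L) = fᵢ(x) + L. -/
open MeasureTheory intervalIntegral

/-- The Bott cocycle
`B(f₁, f₂) = (1/2) ∫_{-L/2}^{L/2} [log f₂'(x)]' · log[f₁'(f₂(x))] dx`. -/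
noncomputable def bottCocycle (L : ℝ) (f₁ f₂ : ℝ → ℝ) : ℝ :=
  (1 / 2) * ∫ x in (-L/2)..(L/2),
    deriv (fun y => Real.log (deriv f₂ y)) x * Real.log (deriv f₁ (f₂ x))

/-- `log (deriv f)` is smooth when `f` is smooth with positive derivative. -/
lemma logDeriv_contDiff {f : ℝ → ℝ} (hf : ContDiff ℝ (⊤ : ℕ∞) f) (hf' : ∀ x, 0 < deriv f x) :
    ContDiff ℝ (⊤ : ℕ∞) (fun x => Real.log (deriv f x)) := by
  have hd : ContDiff ℝ (⊤ : ℕ∞) (deriv f) := (contDiff_infty_iff_deriv.mp (hf.of_le (by simp))).2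
  rw [contDiff_iff_contDiffAt]
  exact fun x => hd.contDiffAt.log (hf' x).ne'

/-- The derivative of a periodic function is periodic. -/
lemma periodic_deriv' {f : ℝ → ℝ} {c : ℝ} (h : Function.Periodic f c) :
    Function.Periodic (deriv f) c := by
  intro x
  have e : (fun y => f (y + c)) = f := funext fun y => h y
  calc deriv f (x + c) = deriv (fun y => f (y + c)) x := (deriv_comp_add_const f c x).symm
    _ = deriv f x := by rw [e]

/-- If `f (x + L) = f x + L` then `deriv f` is `L`-periodic. -/
lemma deriv_periodic_of_equivariant {f : ℝ → ℝ} {c : ℝ} (h : ∀ x, f (x + c) = f x + c) :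
    ∀ x, deriv f (x + c) = deriv f x := by
  intro x
  have e : (fun y => f (y + c)) = fun y => f y + c := funext fun y => h y
  calc deriv f (x + c) = deriv (fun y => f (y + c)) x := (deriv_comp_add_const f c x).symm
    _ = deriv (fun y => f y + c) x := by rw [e]
    _ = deriv f x := by simp

theorem stmt8
    (L : ℝ) (hL : 0 < L) (f₁ f₂ f₃ : ℝ → ℝ)
    (hf₁ : ContDiff ℝ (⊤ : ℕ∞) f₁) (hf₂ : ContDiff ℝ (⊤ : ℕ∞) f₂) (hf₃ : ContDiff ℝ (⊤ : ℕ∞) f₃)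
    (hf₁' : ∀ x, 0 < deriv f₁ x) (hf₂' : ∀ x, 0 < deriv f₂ x) (hf₃' : ∀ x, 0 < deriv f₃ x)
    (hper₁ : ∀ x, f₁ (x + L) = f₁ x + L) (hper₂ : ∀ x, f₂ (x + L) = f₂ x + L)
    (hper₃ : ∀ x, f₃ (x + L) = f₃ x + L) :
    bottCocycle L (f₁ ∘ f₂) f₃ + bottCocycle L f₁ f₂
      = bottCocycle L f₁ (f₂ ∘ f₃) + bottCocycle L f₂ f₃ := by
  have hd₁ : Differentiable ℝ f₁ := hf₁.differentiable (by simp)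
  have hd₂ : Differentiable ℝ f₂ := hf₂.differentiable (by simp)
  have hd₃ : Differentiable ℝ f₃ := hf₃.differentiable (by simp)
  set U₁ : ℝ → ℝ := fun x => Real.log (deriv f₁ x) with hU₁def
  set U₂ : ℝ → ℝ := fun x => Real.log (deriv f₂ x) with hU₂def
  set U₃ : ℝ → ℝ := fun x => Real.log (deriv f₃ x) with hU₃def
  have hU₁ : ContDiff ℝ (⊤ : ℕ∞) U₁ := logDeriv_contDiff hf₁ hf₁'
  have hU₂ : ContDiff ℝ (⊤ : ℕ∞) U₂ := logDeriv_contDiff hf₂ hf₂'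
  have hU₃ : ContDiff ℝ (⊤ : ℕ∞) U₃ := logDeriv_contDiff hf₃ hf₃'
  have hdU₂ : Differentiable ℝ U₂ := hU₂.differentiable (by simp)
  have hdU₃ : Differentiable ℝ U₃ := hU₃.differentiable (by simp)
  have hcdU₂ : Continuous (deriv U₂) := (contDiff_infty_iff_deriv.mp hU₂).2.continuous
  have hcdU₃ : Continuous (deriv U₃) := (contDiff_infty_iff_deriv.mp hU₃).2.continuous
  have hcdf₃ : Continuous (deriv f₃) := (contDiff_infty_iff_deriv.mp (hf₃.of_le (by simp))).2.continuous
  -- log of the derivative of a composition splits as a sum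
  have key₁₂ : ∀ x, Real.log (deriv (f₁ ∘ f₂) x) = U₁ (f₂ x) + U₂ x := by
    intro x
    rw [deriv_comp x (hd₁ _) (hd₂ x), Real.log_mul (hf₁' _).ne' (hf₂' x).ne']
  have key₂₃ : ∀ x, Real.log (deriv (f₂ ∘ f₃) x) = U₂ (f₃ x) + U₃ x := by
    intro x
    rw [deriv_comp x (hd₂ _) (hd₃ x), Real.log_mul (hf₂' _).ne' (hf₃' x).ne']
  -- derivative of `log (deriv (f₂ ∘ f₃))`
  have key₂₃' : ∀ x, deriv (fun y => Real.log (deriv (f₂ ∘ f₃) y)) x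
      = deriv U₂ (f₃ x) * deriv f₃ x + deriv U₃ x := by
    intro x
    have e : (fun y => Real.log (deriv (f₂ ∘ f₃) y)) = fun y => U₂ (f₃ y) + U₃ y :=
      funext fun y => key₂₃ y
    have h1 : HasDerivAt (fun y => U₂ (f₃ y)) (deriv U₂ (f₃ x) * deriv f₃ x) x :=
      (hdU₂ (f₃ x)).hasDerivAt.comp x (hd₃ x).hasDerivAt
    have h2 : HasDerivAt U₃ (deriv U₃ x) x := (hdU₃ x).hasDerivAt
    rw [e]
    exact (h1.add h2).deriv
  -- continuity of the various integrands
  have hcU₁ : Continuous U₁ := hU₁.continuous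
  have hcU₂ : Continuous U₂ := hU₂.continuous
  have hI₁ : Continuous fun x => deriv U₃ x * U₁ (f₂ (f₃ x)) :=
    hcdU₃.mul (hcU₁.comp (hf₂.continuous.comp hf₃.continuous))
  have hI₂ : Continuous fun x => deriv U₃ x * U₂ (f₃ x) :=
    hcdU₃.mul (hcU₂.comp hf₃.continuous)
  have hI₃ : Continuous fun x => (deriv U₂ (f₃ x) * deriv f₃ x) * U₁ (f₂ (f₃ x)) :=
    ((hcdU₂.comp hf₃.continuous).mul hcdf₃).mul
      (hcU₁.comp (hf₂.continuous.comp hf₃.continuous))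
  -- the integrand `h y = deriv U₂ y * U₁ (f₂ y)` is `L`-periodic
  have hdperf₁ := deriv_periodic_of_equivariant hper₁
  have hdperf₂ := deriv_periodic_of_equivariant hper₂
  have hU₂per : Function.Periodic U₂ L := fun x => by
    simp only [hU₂def, hdperf₂ x]
  have hper : Function.Periodic (fun y => deriv U₂ y * U₁ (f₂ y)) L := by
    intro y
    have h1 : deriv U₂ (y + L) = deriv U₂ y := periodic_deriv' hU₂per y
    have h2 : U₁ (f₂ (y + L)) = U₁ (f₂ y) := by
      rw [hper₂ y]
      simp only [hU₁def, hdperf₁ (f₂ y)]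
    simp only [h1, h2]
  -- substitution `y = f₃ x` in the integral of `h ∘ f₃ · f₃'`
  have hch : Continuous fun y => deriv U₂ y * U₁ (f₂ y) :=
    hcdU₂.mul (hcU₁.comp hf₂.continuous)
  have hsub : (∫ x in (-L/2)..(L/2), (deriv U₂ (f₃ x) * deriv f₃ x) * U₁ (f₂ (f₃ x)))
      = ∫ y in (-L/2)..(L/2), deriv U₂ y * U₁ (f₂ y) := by
    have step1 : (∫ x in (-L/2)..(L/2),
          deriv f₃ x • ((fun y => deriv U₂ y * U₁ (f₂ y)) ∘ f₃) x)
        = ∫ y in f₃ (-L/2)..f₃ (L/2), deriv U₂ y * U₁ (f₂ y) :=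
      integral_comp_smul_deriv (fun x _ => (hd₃ x).hasDerivAt) hcdf₃.continuousOn hch
    have e1 : f₃ (L/2) = f₃ (-L/2) + L := by
      have : L/2 = -L/2 + L := by ring
      rw [this, hper₃]
    have e2 : (-L/2 : ℝ) + L = L/2 := by ring
    have step2 : (∫ y in f₃ (-L/2)..f₃ (L/2), deriv U₂ y * U₁ (f₂ y))
        = ∫ y in (-L/2)..(L/2), deriv U₂ y * U₁ (f₂ y) := by
      rw [e1, hper.intervalIntegral_add_eq (f₃ (-L/2)) (-L/2), e2]
    rw [← step2, ← step1]
    apply intervalIntegral.integral_congr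
    intro x _
    simp only [Function.comp_apply, smul_eq_mul]
    ring
  -- rewrite each Bott cocycle
  have eqA : bottCocycle L (f₁ ∘ f₂) f₃
      = (1/2) * ((∫ x in (-L/2)..(L/2), deriv U₃ x * U₁ (f₂ (f₃ x)))
        + ∫ x in (-L/2)..(L/2), deriv U₃ x * U₂ (f₃ x)) := by
    rw [bottCocycle]
    congr 1
    rw [← intervalIntegral.integral_add (hI₁.intervalIntegrable _ _)
      (hI₂.intervalIntegrable _ _)]
    apply intervalIntegral.integral_congr
    intro x _
    beta_reduce
    rw [key₁₂ (f₃ x)]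
    ring
  have eqB : bottCocycle L f₁ f₂
      = (1/2) * ∫ x in (-L/2)..(L/2), deriv U₂ x * U₁ (f₂ x) := by
    rw [bottCocycle]
  have eqC : bottCocycle L f₁ (f₂ ∘ f₃)
      = (1/2) * ((∫ x in (-L/2)..(L/2), (deriv U₂ (f₃ x) * deriv f₃ x) * U₁ (f₂ (f₃ x)))
        + ∫ x in (-L/2)..(L/2), deriv U₃ x * U₁ (f₂ (f₃ x))) := by
    rw [bottCocycle]
    congr 1
    rw [← intervalIntegral.integral_add (hI₃.intervalIntegrable _ _)
      (hI₁.intervalIntegrable _ _)]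
    apply intervalIntegral.integral_congr
    intro x _
    beta_reduce
    simp only [Function.comp_apply]
    rw [key₂₃' x]
    ring
  have eqD : bottCocycle L f₂ f₃
      = (1/2) * ∫ x in (-L/2)..(L/2), deriv U₃ x * U₂ (f₃ x) := by
    rw [bottCocycle]
  rw [eqA, eqB, eqC, eqD, hsub]
  ring
end

section
/- Let f be smooth with f' > 0 and f(x+L) = f(x) + L, let ζ be smooth L-periodic, and let g_ε(x) = x + εζ(x). With B the Bott cocycle B(f₁, f₂) = (1/2)∫_{-L/2}^{L/2} [log f₂'(x)]' log[f₁'(f₂(x))] dx, one has B(f, g_ε)|_{ε=0} = 0 and (d/dε) B(f, g_ε)|_{ε=0} = (1/2) ∫_{-L/2}^{L/2} ζ(x) [f'''(x)/f'(x) − (f''(x)/f'(x))²] dx. -/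
open MeasureTheory intervalIntegral Set

theorem stmt12
    (L : ℝ) (hL : 0 < L) (f ζ : ℝ → ℝ)
    (hf : ContDiff ℝ (⊤ : ℕ∞) f)
    (hf' : ∀ x, 0 < deriv f x)
    (hfper : ∀ x, f (x + L) = f x + L)
    (hζ : ContDiff ℝ (⊤ : ℕ∞) ζ)
    (hζper : ∀ x, ζ (x + L) = ζ x)
    (g : ℝ → ℝ → ℝ)
    (hg : ∀ ε x, g ε x = x + ε * ζ x) :
    bottCocycle L f (g 0) = 0 ∧
    deriv (fun ε => bottCocycle L f (g ε)) 0
      = (1 / 2) * ∫ x in (-L/2)..(L/2),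
          ζ x * (deriv (deriv (deriv f)) x / deriv f x
            - (deriv (deriv f) x / deriv f x) ^ 2) := by
  -- basic smoothness
  obtain ⟨hfd, hf1⟩ := contDiff_infty_iff_deriv.mp (hf.of_le (by simp))
  obtain ⟨hf1d, hf2⟩ := contDiff_infty_iff_deriv.mp hf1
  obtain ⟨hf2d, hf3⟩ := contDiff_infty_iff_deriv.mp hf2
  obtain ⟨hζd, hζ1⟩ := contDiff_infty_iff_deriv.mp (hζ.of_le (by simp))
  obtain ⟨hζ1d, hζ2⟩ := contDiff_infty_iff_deriv.mp hζ1
  have pcont : Continuous (deriv f) := hf1.continuous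
  have qcont : Continuous (deriv (deriv f)) := hf2.continuous
  have rcont : Continuous (deriv (deriv (deriv f))) := hf3.continuous
  have ζcont : Continuous ζ := hζ.continuous
  have φcont : Continuous (deriv ζ) := hζ1.continuous
  have ψcont : Continuous (deriv (deriv ζ)) := hζ2.continuous
  -- periodicity of derivatives
  have key : ∀ (u : ℝ → ℝ) (c : ℝ), (∀ x, u (x + L) = u x + c) →
      ∀ x, deriv u (x + L) = deriv u x := by
    intro u c h x
    have h1 : deriv (fun y => u (y + L)) x = deriv u (x + L) :=
      deriv_comp_add_const u L x
    rw [funext h, deriv_add_const] at h1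
    exact h1.symm
  have hf1per : ∀ x, deriv f (x + L) = deriv f x := key f L hfper
  have hf2per : ∀ x, deriv (deriv f) (x + L) = deriv (deriv f) x :=
    key (deriv f) 0 (fun x => by rw [hf1per, add_zero])
  have hζ1per : ∀ x, deriv ζ (x + L) = deriv ζ x :=
    key ζ 0 (fun x => by rw [hζper, add_zero])
  -- Part 1
  have hg0 : g 0 = fun x => x := by funext x; simp [hg]
  have part1 : bottCocycle L f (g 0) = 0 := by
    have h1 : (fun y => Real.log (deriv (g 0) y)) = fun _ => (0:ℝ) := by
      funext y
      rw [hg0]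
      simp
    unfold bottCocycle
    rw [h1]
    simp
  refine ⟨part1, ?_⟩
  -- Part 2 : setup of the bound
  obtain ⟨M, hM⟩ := isCompact_uIcc.exists_bound_of_continuousOn
    (φcont.continuousOn (s := Set.uIcc (-L/2) (L/2)))
  have hM0 : 0 ≤ M := le_trans (norm_nonneg _) (hM (-L/2) left_mem_uIcc)
  set δ : ℝ := 1 / (2 * (M + 1)) with hδdef
  have hδ : 0 < δ := by positivity
  have hδM : δ * (M + 1) = 1/2 := by
    rw [hδdef]
    field_simp
  have hden : ∀ ε : ℝ, |ε| ≤ δ → ∀ x ∈ Set.uIcc (-L/2) (L/2),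
      (1:ℝ)/2 ≤ 1 + ε * deriv ζ x := by
    intro ε hε x hx
    have h1 : |ε * deriv ζ x| ≤ δ * M := by
      rw [abs_mul]
      have := hM x hx
      rw [Real.norm_eq_abs] at this
      exact mul_le_mul hε this (abs_nonneg _) hδ.le
    have h2 : δ * M ≤ 1/2 := by nlinarith
    have h3 := neg_abs_le (ε * deriv ζ x)
    linarith
  -- the explicit integrand and its ε-derivative
  set G : ℝ → ℝ → ℝ := fun ε x =>
    ε * deriv (deriv ζ) x / (1 + ε * deriv ζ x) * Real.log (deriv f (x + ε * ζ x)) with hG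
  set G' : ℝ → ℝ → ℝ := fun ε x =>
    (deriv (deriv ζ) x * (1 + ε * deriv ζ x) - ε * deriv (deriv ζ) x * deriv ζ x) /
        (1 + ε * deriv ζ x) ^ 2 * Real.log (deriv f (x + ε * ζ x))
      + ε * deriv (deriv ζ) x / (1 + ε * deriv ζ x) *
        (deriv (deriv f) (x + ε * ζ x) * ζ x / deriv f (x + ε * ζ x)) with hG'
  -- near 0 the Bott cocycle equals the explicit integral
  have hFG : ∀ ε : ℝ, |ε| ≤ δ →
      bottCocycle L f (g ε) = (1/2) * ∫ x in (-L/2)..(L/2), G ε x := by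
    intro ε hε
    unfold bottCocycle
    norm_num only
    congr 1
    apply intervalIntegral.integral_congr
    intro x hx
    have hgε : g ε = fun y => y + ε * ζ y := funext (hg ε)
    have hderivg : deriv (g ε) = fun y => 1 + ε * deriv ζ y := by
      funext y
      rw [hgε]
      exact ((hasDerivAt_id y).add (((hζd y).hasDerivAt).const_mul ε)).deriv
    have hne : 1 + ε * deriv ζ x ≠ 0 := by
      have := hden ε hε x hx
      linarith
    have hlog : HasDerivAt (fun y => Real.log (deriv (g ε) y))
        (ε * deriv (deriv ζ) x / (1 + ε * deriv ζ x)) x := by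
      simp only [hderivg]
      exact ((((hζ1d x).hasDerivAt).const_mul ε).const_add 1).log hne
    show deriv (fun y => Real.log (deriv (g ε) y)) x * Real.log (deriv f (g ε x)) = G ε x
    rw [hlog.deriv, hgε]
  -- continuity of G on the interval, for fixed small ε
  have hGcontOn : ∀ ε : ℝ, |ε| ≤ δ → ContinuousOn (G ε) (Set.uIcc (-L/2) (L/2)) := by
    intro ε hε
    have hne : ∀ x ∈ Set.uIcc (-L/2) (L/2), 1 + ε * deriv ζ x ≠ 0 := by
      intro x hx; have := hden ε hε x hx; linarith
    have c1 : Continuous fun x : ℝ => ε * deriv (deriv ζ) x := continuous_const.mul ψcont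
    have c2 : Continuous fun x : ℝ => 1 + ε * deriv ζ x :=
      continuous_const.add (continuous_const.mul φcont)
    have c3 : Continuous fun x : ℝ => Real.log (deriv f (x + ε * ζ x)) :=
      (pcont.comp (continuous_id.add (continuous_const.mul ζcont))).log
        (fun x => (hf' _).ne')
    exact ((c1.continuousOn.div c2.continuousOn hne).mul c3.continuousOn)
  -- the compact bound for G'
  have hSc : IsCompact ((Set.Icc (-(δ/2)) (δ/2)) ×ˢ Set.uIcc (-L/2) (L/2)) :=
    isCompact_Icc.prod isCompact_uIcc
  have hG'cont : ContinuousOn (fun pr : ℝ × ℝ => G' pr.1 pr.2)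
      ((Set.Icc (-(δ/2)) (δ/2)) ×ˢ Set.uIcc (-L/2) (L/2)) := by
    have hneS : ∀ pr : ℝ × ℝ, pr ∈ (Set.Icc (-(δ/2)) (δ/2)) ×ˢ Set.uIcc (-L/2) (L/2) →
        1 + pr.1 * deriv ζ pr.2 ≠ 0 := by
      rintro ⟨ε, x⟩ ⟨hε, hx⟩
      have hεδ : |ε| ≤ δ := by
        rw [abs_le]
        constructor <;> [linarith [hε.1, hδ.le]; linarith [hε.2, hδ.le]]
      have := hden ε hεδ x hx
      linarith
    have cψ : Continuous fun pr : ℝ × ℝ => deriv (deriv ζ) pr.2 := ψcont.comp continuous_snd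
    have cφ : Continuous fun pr : ℝ × ℝ => deriv ζ pr.2 := φcont.comp continuous_snd
    have cζ : Continuous fun pr : ℝ × ℝ => ζ pr.2 := ζcont.comp continuous_snd
    have cden : Continuous fun pr : ℝ × ℝ => 1 + pr.1 * deriv ζ pr.2 :=
      continuous_const.add (continuous_fst.mul cφ)
    have cinner : Continuous fun pr : ℝ × ℝ => pr.2 + pr.1 * ζ pr.2 :=
      continuous_snd.add (continuous_fst.mul cζ)
    have cp : Continuous fun pr : ℝ × ℝ => deriv f (pr.2 + pr.1 * ζ pr.2) := pcont.comp cinner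
    have cq : Continuous fun pr : ℝ × ℝ => deriv (deriv f) (pr.2 + pr.1 * ζ pr.2) :=
      qcont.comp cinner
    have clog : Continuous fun pr : ℝ × ℝ => Real.log (deriv f (pr.2 + pr.1 * ζ pr.2)) :=
      cp.log (fun pr => (hf' _).ne')
    have cnum : Continuous fun pr : ℝ × ℝ =>
        deriv (deriv ζ) pr.2 * (1 + pr.1 * deriv ζ pr.2)
          - pr.1 * deriv (deriv ζ) pr.2 * deriv ζ pr.2 :=
      (cψ.mul cden).sub ((continuous_fst.mul cψ).mul cφ)
    have hne2 : ∀ pr : ℝ × ℝ, pr ∈ (Set.Icc (-(δ/2)) (δ/2)) ×ˢ Set.uIcc (-L/2) (L/2) →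
        (1 + pr.1 * deriv ζ pr.2) ^ 2 ≠ 0 := fun pr hpr => pow_ne_zero 2 (hneS pr hpr)
    have cfrac : Continuous fun pr : ℝ × ℝ =>
        deriv (deriv f) (pr.2 + pr.1 * ζ pr.2) * ζ pr.2 / deriv f (pr.2 + pr.1 * ζ pr.2) :=
      (cq.mul cζ).div cp (fun pr => (hf' _).ne')
    exact (((cnum.continuousOn.div (cden.pow 2).continuousOn hne2).mul
      clog.continuousOn).add
      (((continuous_fst.mul cψ).continuousOn.div cden.continuousOn hneS).mul
        cfrac.continuousOn))
  obtain ⟨C, hC⟩ := hSc.exists_bound_of_continuousOn hG'cont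
  -- differentiation under the integral sign
  have hδ2 : 0 < δ / 2 := half_pos hδ
  have hballδ : ∀ ε : ℝ, ε ∈ Metric.ball (0:ℝ) (δ/2) → |ε| ≤ δ := by
    intro ε hε
    rw [Metric.mem_ball, Real.dist_eq, sub_zero] at hε
    linarith
  have main := intervalIntegral.hasDerivAt_integral_of_dominated_loc_of_deriv_le
      (F := G) (F' := G') (x₀ := (0:ℝ)) (a := -L/2) (b := L/2)
      (bound := fun _ => C) (μ := volume) (Metric.ball_mem_nhds (0:ℝ) hδ2)
      ?_ ?_ ?_ ?_ ?_ ?_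
  · -- eventually equal near 0, so equal derivatives
    have hDeriv : HasDerivAt (fun ε => (1/2 : ℝ) * ∫ x in (-L/2)..(L/2), G ε x)
        ((1/2) * ∫ x in (-L/2)..(L/2), G' 0 x) 0 := main.2.const_mul (1/2)
    have hEv : (fun ε => bottCocycle L f (g ε)) =ᶠ[nhds (0:ℝ)]
        fun ε => (1/2 : ℝ) * ∫ x in (-L/2)..(L/2), G ε x := by
      filter_upwards [Metric.ball_mem_nhds (0:ℝ) hδ2] with ε hε
      exact hFG ε (hballδ ε hε)
    rw [hEv.deriv_eq, hDeriv.deriv]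
    -- simplify G' 0
    have hG'0 : ∫ x in (-L/2)..(L/2), G' 0 x
        = ∫ x in (-L/2)..(L/2), deriv (deriv ζ) x * Real.log (deriv f x) := by
      apply intervalIntegral.integral_congr
      intro x _
      simp [hG']
    rw [hG'0]
    -- integration by parts, twice
    have hab' : (L/2 : ℝ) = -L/2 + L := by ring
    have clogp : Continuous fun x : ℝ => Real.log (deriv f x) :=
      pcont.log (fun x => (hf' x).ne')
    have cqp : Continuous fun x : ℝ => deriv (deriv f) x / deriv f x :=
      qcont.div pcont (fun x => (hf' x).ne')
    have cV : Continuous fun x : ℝ => deriv (deriv (deriv f)) x / deriv f x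
        - (deriv (deriv f) x / deriv f x) ^ 2 :=
      (rcont.div pcont (fun x => (hf' x).ne')).sub (cqp.pow 2)
    have i1 : IntervalIntegrable (fun x => deriv (deriv ζ) x * Real.log (deriv f x))
        volume (-L/2) (L/2) := (ψcont.mul clogp).intervalIntegrable _ _
    have i2 : IntervalIntegrable (fun x => deriv ζ x * (deriv (deriv f) x / deriv f x))
        volume (-L/2) (L/2) := (φcont.mul cqp).intervalIntegrable _ _
    have i3 : IntervalIntegrable (fun x => ζ x * (deriv (deriv (deriv f)) x / deriv f x
        - (deriv (deriv f) x / deriv f x) ^ 2)) volume (-L/2) (L/2) :=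
      (ζcont.mul cV).intervalIntegrable _ _
    have ibp1 : (∫ x in (-L/2)..(L/2), (deriv (deriv ζ) x * Real.log (deriv f x)
        + deriv ζ x * (deriv (deriv f) x / deriv f x)))
        = deriv ζ (L/2) * Real.log (deriv f (L/2))
          - deriv ζ (-L/2) * Real.log (deriv f (-L/2)) := by
      apply intervalIntegral.integral_deriv_mul_eq_sub
      · intro x _; exact (hζ1d x).hasDerivAt
      · intro x _; exact ((hf1d x).hasDerivAt).log (hf' x).ne'
      · exact ψcont.intervalIntegrable _ _
      · exact cqp.intervalIntegrable _ _
    have hv2 : ∀ x : ℝ, HasDerivAt (fun y => deriv (deriv f) y / deriv f y)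
        (deriv (deriv (deriv f)) x / deriv f x - (deriv (deriv f) x / deriv f x) ^ 2) x := by
      intro x
      have h : HasDerivAt (fun y => deriv (deriv f) y / deriv f y) _ x :=
        ((hf2d x).hasDerivAt).div ((hf1d x).hasDerivAt) (hf' x).ne'
      convert h using 1
      field_simp [(hf' x).ne']
    have ibp2 : (∫ x in (-L/2)..(L/2), (deriv ζ x * (deriv (deriv f) x / deriv f x)
        + ζ x * (deriv (deriv (deriv f)) x / deriv f x
          - (deriv (deriv f) x / deriv f x) ^ 2)))
        = ζ (L/2) * (deriv (deriv f) (L/2) / deriv f (L/2))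
          - ζ (-L/2) * (deriv (deriv f) (-L/2) / deriv f (-L/2)) := by
      apply intervalIntegral.integral_deriv_mul_eq_sub
      · intro x _; exact (hζd x).hasDerivAt
      · intro x _; exact hv2 x
      · exact φcont.intervalIntegrable _ _
      · exact cV.intervalIntegrable _ _
    rw [intervalIntegral.integral_add i1 i2] at ibp1
    rw [intervalIntegral.integral_add i2 i3] at ibp2
    have hb1 : deriv ζ (L/2) * Real.log (deriv f (L/2))
        - deriv ζ (-L/2) * Real.log (deriv f (-L/2)) = 0 := by
      rw [hab', hζ1per, hf1per]
      ring
    have hb2 : ζ (L/2) * (deriv (deriv f) (L/2) / deriv f (L/2))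
        - ζ (-L/2) * (deriv (deriv f) (-L/2) / deriv f (-L/2)) = 0 := by
      rw [hab', hζper, hf2per, hf1per]
      ring
    rw [hb1] at ibp1
    rw [hb2] at ibp2
    have : (∫ x in (-L/2)..(L/2), deriv (deriv ζ) x * Real.log (deriv f x))
        = ∫ x in (-L/2)..(L/2), ζ x * (deriv (deriv (deriv f)) x / deriv f x
          - (deriv (deriv f) x / deriv f x) ^ 2) := by linarith
    rw [this]
  · -- hF_meas
    filter_upwards [Metric.ball_mem_nhds (0:ℝ) hδ2] with ε hε
    exact ((hGcontOn ε (hballδ ε hε)).mono uIoc_subset_uIcc).aestronglyMeasurable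
      measurableSet_uIoc
  · -- hF_int
    have h0 : G 0 = fun _ => (0:ℝ) := by funext x; simp [hG]
    rw [h0]
    exact intervalIntegrable_const
  · -- hF'_meas
    have : ContinuousOn (G' 0) (Set.uIcc (-L/2) (L/2)) := by
      intro x hx
      have : (fun pr : ℝ × ℝ => G' pr.1 pr.2) ∘ (fun x : ℝ => ((0:ℝ), x)) = G' 0 := rfl
      rw [← this]
      apply ContinuousWithinAt.comp (hG'cont ((0:ℝ), x) ⟨by constructor <;> simp [hδ2.le], hx⟩)
        ((continuous_const.prodMk continuous_id).continuousWithinAt)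
      intro y hy
      exact ⟨by constructor <;> simp [hδ2.le], hy⟩
    exact (this.mono uIoc_subset_uIcc).aestronglyMeasurable measurableSet_uIoc
  · -- h_bound
    apply Filter.Eventually.of_forall
    intro x hx ε hε
    rw [Metric.mem_ball, Real.dist_eq, sub_zero] at hε
    have := hC (ε, x) ⟨⟨by linarith [neg_abs_le ε, abs_le.mp hε.le], by
      linarith [le_abs_self ε]⟩, uIoc_subset_uIcc hx⟩
    exact this
  · -- bound integrable
    exact intervalIntegrable_const
  · -- h_diff
    apply Filter.Eventually.of_forall
    intro x hx ε hε
    have hxI : x ∈ Set.uIcc (-L/2) (L/2) := uIoc_subset_uIcc hx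
    have hne : 1 + ε * deriv ζ x ≠ 0 := by
      have := hden ε (hballδ ε hε) x hxI
      linarith
    have h1 : HasDerivAt (fun e : ℝ => e * deriv (deriv ζ) x) (deriv (deriv ζ) x) ε :=
      hasDerivAt_mul_const _
    have hdend : HasDerivAt (fun e : ℝ => 1 + e * deriv ζ x) (deriv ζ x) ε :=
      (hasDerivAt_mul_const _).const_add 1
    have hu : HasDerivAt (fun e : ℝ => e * deriv (deriv ζ) x / (1 + e * deriv ζ x))
        ((deriv (deriv ζ) x * (1 + ε * deriv ζ x)
          - ε * deriv (deriv ζ) x * deriv ζ x) / (1 + ε * deriv ζ x) ^ 2) ε :=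
      h1.div hdend hne
    have hinner : HasDerivAt (fun e : ℝ => x + e * ζ x) (ζ x) ε :=
      (hasDerivAt_mul_const _).const_add x
    have hcomp : HasDerivAt (fun e : ℝ => deriv f (x + e * ζ x))
        (deriv (deriv f) (x + ε * ζ x) * ζ x) ε :=
      ((hf1d _).hasDerivAt).comp ε hinner
    have hv : HasDerivAt (fun e : ℝ => Real.log (deriv f (x + e * ζ x)))
        (deriv (deriv f) (x + ε * ζ x) * ζ x / deriv f (x + ε * ζ x)) ε :=
      hcomp.log (hf' _).ne'
    exact hu.mul hv
end

section
/- Let f be smooth with f' > 0 and f(x+L) = f(x) + L, let ζ be smooth L-periodic, and let g_ε(x) = x + εζ(x). With B the Bott cocycle, one has (d/dε) B(f ∘ g_ε, f⁻¹)|_{ε=0} = (1/2) ∫_{-L/2}^{L/2} ζ(x) [f'''(x)/f'(x) − 2(f''(x)/f'(x))²] dx. -/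
open MeasureTheory intervalIntegral

lemma aux_deriv_per {f : ℝ → ℝ} {L c : ℝ} (hp : ∀ x, f (x + L) = f x + c) (x : ℝ) :
    deriv f (x + L) = deriv f x := by
  have h1 : deriv f (x + L) = deriv (fun y => f (y + L)) x := (deriv_comp_add_const f L x).symm
  have h2 : (fun y => f (y + L)) = fun y => f y + c := funext hp
  rw [h1, h2, deriv_add_const]

lemma aux_per_bound {h : ℝ → ℝ} {L : ℝ} (hL : 0 < L) (hc : Continuous h)
    (hp : ∀ x, h (x + L) = h x) : ∃ C : ℝ, 0 ≤ C ∧ ∀ x, |h x| ≤ C := by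
  obtain ⟨C, hC⟩ :=
    (isCompact_Icc (a := (0:ℝ)) (b := L)).exists_bound_of_continuousOn hc.continuousOn
  refine ⟨max C 0, le_max_right _ _, fun x => ?_⟩
  obtain ⟨y, hy, hxy⟩ := Function.Periodic.exists_mem_Ico₀ (fun x => hp x) hL x
  rw [hxy]
  calc |h y| = ‖h y‖ := (Real.norm_eq_abs _).symm
  _ ≤ C := hC y ⟨hy.1, hy.2.le⟩
  _ ≤ max C 0 := le_max_left _ _

set_option maxHeartbeats 2000000 in
theorem stmt13
    (L : ℝ) (hL : 0 < L) (f ζ : ℝ → ℝ)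
    (hf : ContDiff ℝ (⊤ : ℕ∞) f)
    (hf' : ∀ x, 0 < deriv f x)
    (hfper : ∀ x, f (x + L) = f x + L)
    (hζ : ContDiff ℝ (⊤ : ℕ∞) ζ)
    (hζper : ∀ x, ζ (x + L) = ζ x)
    (g : ℝ → ℝ → ℝ)
    (hg : ∀ ε x, g ε x = x + ε * ζ x) :
    deriv (fun ε => bottCocycle L (f ∘ g ε) (Function.invFun f)) 0
      = (1 / 2) * ∫ x in (-L/2)..(L/2),
          ζ x * (deriv (deriv (deriv f)) x / deriv f x
            - 2 * (deriv (deriv f) x / deriv f x) ^ 2) := by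
  -- ## Setup: smoothness of derivatives
  have hDf : Differentiable ℝ f := hf.differentiable (by simp)
  have hp1s : ContDiff ℝ (↑(⊤:ℕ∞)) (deriv f) := (contDiff_infty_iff_deriv.mp (hf.of_le (by simp))).2
  have hDp1 : Differentiable ℝ (deriv f) := hp1s.differentiable (by simp)
  have hp1c : Continuous (deriv f) := hDp1.continuous
  have hp2s : ContDiff ℝ (↑(⊤:ℕ∞)) (deriv (deriv f)) := (contDiff_infty_iff_deriv.mp hp1s).2
  have hDp2 : Differentiable ℝ (deriv (deriv f)) := hp2s.differentiable (by simp)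
  have hp2c : Continuous (deriv (deriv f)) := hDp2.continuous
  have hp3c : Continuous (deriv (deriv (deriv f))) :=
    ((contDiff_infty_iff_deriv.mp hp2s).2).continuous
  have hDζ : Differentiable ℝ ζ := hζ.differentiable (by simp)
  have hζc : Continuous ζ := hDζ.continuous
  have hz1s : ContDiff ℝ (↑(⊤:ℕ∞)) (deriv ζ) := (contDiff_infty_iff_deriv.mp (hζ.of_le (by simp))).2
  have hDz1 : Differentiable ℝ (deriv ζ) := hz1s.differentiable (by simp)
  have hz1c : Continuous (deriv ζ) := hDz1.continuous
  -- ## Periodicity of derivatives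
  have hp1per : ∀ x, deriv f (x + L) = deriv f x := fun x => aux_deriv_per hfper x
  have hp2per : ∀ x, deriv (deriv f) (x + L) = deriv (deriv f) x := fun x =>
    aux_deriv_per (c := 0) (fun y => by rw [hp1per, add_zero]) x
  have hp3per : ∀ x, deriv (deriv (deriv f)) (x + L) = deriv (deriv (deriv f)) x := fun x =>
    aux_deriv_per (c := 0) (fun y => by rw [hp2per, add_zero]) x
  have hz1per : ∀ x, deriv ζ (x + L) = deriv ζ x := fun x =>
    aux_deriv_per (c := 0) (fun y => by rw [hζper, add_zero]) x
  -- ## f is a bijection with smooth inverse ψ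
  have hmono : StrictMono f := strictMono_of_deriv_pos hf'
  have hup : ∀ n : ℕ, f (n * L) = f 0 + n * L := by
    intro n
    induction n with
    | zero => simp
    | succ n ih =>
      have : ((n+1 : ℕ) : ℝ) * L = n * L + L := by push_cast; ring
      rw [this, hfper, ih]; ring
  have hdown : ∀ n : ℕ, f (-(n * L)) = f 0 - n * L := by
    intro n
    induction n with
    | zero => simp
    | succ n ih =>
      have h1 : -((n : ℝ) * L) = -(((n+1:ℕ) : ℝ) * L) + L := by push_cast; ring
      have := hfper (-(((n+1:ℕ):ℝ) * L))
      rw [← h1] at this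
      rw [ih] at this
      push_cast
      push_cast at this
      linarith
  have htop : Filter.Tendsto f Filter.atTop Filter.atTop := by
    apply Filter.tendsto_atTop_atTop_of_monotone hmono.monotone
    intro b
    obtain ⟨n, hn⟩ := exists_nat_ge ((b - f 0) / L)
    refine ⟨n * L, ?_⟩
    rw [hup n]
    have : b - f 0 ≤ n * L := by
      calc b - f 0 = (b - f 0)/L * L := by field_simp
      _ ≤ n * L := by apply mul_le_mul_of_nonneg_right hn hL.le
    linarith
  have hbot : Filter.Tendsto f Filter.atBot Filter.atBot := by
    apply Filter.tendsto_atBot_atBot_of_monotone hmono.monotone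
    intro b
    obtain ⟨n, hn⟩ := exists_nat_ge ((f 0 - b) / L)
    refine ⟨-(n * L), ?_⟩
    rw [hdown n]
    have : f 0 - b ≤ n * L := by
      calc f 0 - b = (f 0 - b)/L * L := by field_simp
      _ ≤ n * L := by apply mul_le_mul_of_nonneg_right hn hL.le
    linarith
  have hsurj : Function.Surjective f := hDf.continuous.surjective htop hbot
  have hinj : Function.Injective f := hmono.injective
  set ψ := Function.invFun f with hψdef
  have hfψ : ∀ x, f (ψ x) = x := fun x => Function.rightInverse_invFun hsurj x
  have hψf : ∀ x, ψ (f x) = x := fun x => Function.leftInverse_invFun hinj x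
  have hψmono : StrictMono ψ := by
    intro x y hxy
    by_contra hc
    push_neg at hc
    have := hmono.monotone hc
    rw [hfψ, hfψ] at this
    exact absurd this (not_le.mpr hxy)
  have hψsurj : Function.Surjective ψ := fun x => ⟨f x, hψf x⟩
  have hψcont : Continuous ψ := Monotone.continuous_of_surjective hψmono.monotone hψsurj
  have hψd : ∀ x, HasDerivAt ψ (deriv f (ψ x))⁻¹ x := fun x =>
    HasDerivAt.of_local_left_inverse hψcont.continuousAt ((hDf (ψ x)).hasDerivAt)
      (ne_of_gt (hf' _)) (Filter.Eventually.of_forall hfψ)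
  have hψper : ∀ x, ψ (x + L) = ψ x + L := fun x => hinj (by rw [hfψ, hfper, hfψ])
  -- ## The kernel K
  set K : ℝ → ℝ := fun x => -(deriv (deriv f) (ψ x) / (deriv f (ψ x))^2) with hKdef
  have hKderiv : ∀ x, deriv (fun y => Real.log (deriv ψ y)) x = K x := by
    intro x
    have hψder : deriv ψ = fun x => (deriv f (ψ x))⁻¹ := funext fun x => (hψd x).deriv
    have h1 : (fun y => Real.log (deriv ψ y)) = fun y => -Real.log (deriv f (ψ y)) := by
      funext y
      rw [hψder, Real.log_inv]
    rw [h1]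
    have hc : HasDerivAt (fun y => deriv f (ψ y))
        (deriv (deriv f) (ψ x) * (deriv f (ψ x))⁻¹) x :=
      (hDp1 (ψ x)).hasDerivAt.comp x (hψd x)
    have h2 : HasDerivAt (fun y => -Real.log (deriv f (ψ y))) _ x := (hc.log (ne_of_gt (hf' _))).neg
    rw [h2.deriv, hKdef]
    have hne : deriv f (ψ x) ≠ 0 := ne_of_gt (hf' _)
    rw [neg_inj, div_eq_div_iff hne (by positivity), sq]
    field_simp
  have hKcont : Continuous K := by
    apply Continuous.neg
    exact (hp2c.comp hψcont).div ((hp1c.comp hψcont).pow 2)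
      (fun x => pow_ne_zero _ (ne_of_gt (hf' _)))
  have hKper : ∀ x, K (x + L) = K x := by
    intro x
    show -(deriv (deriv f) (ψ (x+L)) / deriv f (ψ (x+L)) ^ 2)
      = -(deriv (deriv f) (ψ x) / deriv f (ψ x) ^ 2)
    rw [hψper, hp1per, hp2per]
  -- ## Bounds
  obtain ⟨CK, hCK0, hCK⟩ := aux_per_bound hL hKcont hKper
  obtain ⟨Cz, hCz0, hCz⟩ := aux_per_bound hL hζc hζper
  obtain ⟨M, hM0, hM⟩ := aux_per_bound hL hz1c hz1per
  obtain ⟨CR, hCR0, hCR⟩ := aux_per_bound hL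
    (hp2c.div hp1c (fun x => ne_of_gt (hf' x)))
    (fun x => by show deriv (deriv f) (x+L) / deriv f (x+L) = deriv (deriv f) x / deriv f x; rw [hp1per, hp2per])
  set δ : ℝ := (M + 1)⁻¹ with hδdef
  have hM1 : (0:ℝ) < M + 1 := by linarith
  have δpos : 0 < δ := inv_pos.mpr hM1
  have hpos : ∀ (ε : ℝ), |ε| < δ → ∀ t, (M+1)⁻¹ ≤ 1 + ε * deriv ζ t := by
    intro ε hε t
    have h1 : |ε * deriv ζ t| ≤ |ε| * M := by
      rw [abs_mul]
      exact mul_le_mul_of_nonneg_left (hM t) (abs_nonneg ε)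
    have h2 : |ε| * M ≤ δ * M := mul_le_mul_of_nonneg_right hε.le hM0
    have h3 : δ * (M + 1) = 1 := inv_mul_cancel₀ (ne_of_gt hM1)
    have h5 : δ * M + δ = 1 := by rw [← h3]; ring
    have h4 : -(δ * M) ≤ ε * deriv ζ t := by
      have := neg_abs_le (ε * deriv ζ t)
      linarith
    linarith
  have hbpos : ∀ (ε : ℝ), |ε| < δ → ∀ t, 0 < 1 + ε * deriv ζ t := fun ε hε t =>
    lt_of_lt_of_le (inv_pos.mpr hM1) (hpos ε hε t)
  -- ## Rewrite the Bott cocycle using explicit integrand F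
  have hBF : ∀ ε : ℝ, bottCocycle L (f ∘ g ε) ψ
      = (1/2) * ∫ x in (-L/2)..(L/2),
          K x * Real.log (deriv f (ψ x + ε * ζ (ψ x)) * (1 + ε * deriv ζ (ψ x))) := by
    intro ε
    rw [bottCocycle]
    congr 1
    apply intervalIntegral.integral_congr
    intro x _
    show deriv (fun y => Real.log (deriv ψ y)) x * Real.log (deriv (f ∘ g ε) (ψ x))
      = K x * Real.log (deriv f (ψ x + ε * ζ (ψ x)) * (1 + ε * deriv ζ (ψ x)))
    rw [hKderiv]
    congr 1
    have hgε : f ∘ g ε = f ∘ (fun y => y + ε * ζ y) := by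
      funext y
      simp [Function.comp, hg]
    have inner : HasDerivAt (fun y => y + ε * ζ y) (1 + ε * deriv ζ (ψ x)) (ψ x) :=
      (hasDerivAt_id _).add (((hDζ (ψ x)).hasDerivAt).const_mul ε)
    have hd : HasDerivAt (f ∘ (fun y => y + ε * ζ y))
        (deriv f (ψ x + ε * ζ (ψ x)) * (1 + ε * deriv ζ (ψ x))) (ψ x) :=
      HasDerivAt.comp (ψ x) ((hDf _).hasDerivAt) inner
    rw [hgε, hd.deriv]
  -- ## Differentiation under the integral sign
  have hF_meas : ∀ᶠ (ε:ℝ) in nhds 0, AEStronglyMeasurable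
      (fun x => K x * Real.log (deriv f (ψ x + ε * ζ (ψ x)) * (1 + ε * deriv ζ (ψ x))))
      (volume.restrict (Set.uIoc (-L/2) (L/2))) := by
    filter_upwards [Metric.ball_mem_nhds (0:ℝ) δpos] with ε hε
    have hε' : |ε| < δ := by simpa [Real.dist_eq] using hε
    have hicont : Continuous (fun x =>
        deriv f (ψ x + ε * ζ (ψ x)) * (1 + ε * deriv ζ (ψ x))) :=
      (hp1c.comp (hψcont.add (continuous_const.mul (hζc.comp hψcont)))).mul
        (continuous_const.add (continuous_const.mul (hz1c.comp hψcont)))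
    exact (hKcont.mul (hicont.log
      (fun x => ne_of_gt (mul_pos (hf' _) (hbpos ε hε' _))))).aestronglyMeasurable
  have hF_int : IntervalIntegrable
      (fun x => K x * Real.log (deriv f (ψ x + (0:ℝ) * ζ (ψ x)) * (1 + (0:ℝ) * deriv ζ (ψ x))))
      volume (-L/2) (L/2) := by
    have hicont : Continuous (fun x =>
        deriv f (ψ x + (0:ℝ) * ζ (ψ x)) * (1 + (0:ℝ) * deriv ζ (ψ x))) :=
      (hp1c.comp (hψcont.add (continuous_const.mul (hζc.comp hψcont)))).mul
        (continuous_const.add (continuous_const.mul (hz1c.comp hψcont)))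
    exact (hKcont.mul (hicont.log
      (fun x => ne_of_gt (mul_pos (hf' _) (hbpos 0 (by simpa using δpos) _))))).intervalIntegrable _ _
  have hF'_meas : AEStronglyMeasurable
      (fun x => K x * (ζ (ψ x) * (deriv (deriv f) (ψ x + (0:ℝ) * ζ (ψ x))
        / deriv f (ψ x + (0:ℝ) * ζ (ψ x))) + deriv ζ (ψ x) / (1 + (0:ℝ) * deriv ζ (ψ x))))
      (volume.restrict (Set.uIoc (-L/2) (L/2))) := by
    have hcont : Continuous (fun x => K x * (ζ (ψ x) * (deriv (deriv f) (ψ x + (0:ℝ) * ζ (ψ x))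
        / deriv f (ψ x + (0:ℝ) * ζ (ψ x))) + deriv ζ (ψ x) / (1 + (0:ℝ) * deriv ζ (ψ x)))) := by
      apply hKcont.mul
      apply Continuous.add
      · apply (hζc.comp hψcont).mul
        exact (hp2c.comp (hψcont.add (continuous_const.mul (hζc.comp hψcont)))).div
          (hp1c.comp (hψcont.add (continuous_const.mul (hζc.comp hψcont))))
          (fun x => ne_of_gt (hf' _))
      · exact (hz1c.comp hψcont).div
          (continuous_const.add (continuous_const.mul (hz1c.comp hψcont)))
          (fun x => ne_of_gt (hbpos 0 (by simpa using δpos) _))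
    exact hcont.aestronglyMeasurable
  have h_bound : ∀ᵐ t ∂(volume : Measure ℝ), t ∈ Set.uIoc (-L/2) (L/2) →
      ∀ ε ∈ Metric.ball (0:ℝ) δ,
        ‖K t * (ζ (ψ t) * (deriv (deriv f) (ψ t + ε * ζ (ψ t))
          / deriv f (ψ t + ε * ζ (ψ t))) + deriv ζ (ψ t) / (1 + ε * deriv ζ (ψ t)))‖
          ≤ CK * (Cz * CR + M * (M+1)) := by
    apply Filter.Eventually.of_forall
    intro t _ ε hε
    have hε' : |ε| < δ := by simpa [Real.dist_eq] using hε
    have hb : 0 < 1 + ε * deriv ζ (ψ t) := hbpos ε hε' _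
    rw [Real.norm_eq_abs, abs_mul]
    apply mul_le_mul (hCK t) ?_ (abs_nonneg _) hCK0
    calc |ζ (ψ t) * (deriv (deriv f) (ψ t + ε * ζ (ψ t)) / deriv f (ψ t + ε * ζ (ψ t)))
          + deriv ζ (ψ t) / (1 + ε * deriv ζ (ψ t))|
        ≤ |ζ (ψ t) * (deriv (deriv f) (ψ t + ε * ζ (ψ t)) / deriv f (ψ t + ε * ζ (ψ t)))|
          + |deriv ζ (ψ t) / (1 + ε * deriv ζ (ψ t))| := abs_add_le _ _
      _ ≤ Cz * CR + M * (M+1) := by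
          apply add_le_add
          · rw [abs_mul]
            exact mul_le_mul (hCz _) (hCR _) (abs_nonneg _) hCz0
          · rw [abs_div, abs_of_pos hb, div_le_iff₀ hb]
            have e1 : (M*(M+1)) * (M+1)⁻¹ = M := by field_simp
            have e2 : (M*(M+1)) * (M+1)⁻¹ ≤ (M*(M+1)) * (1 + ε * deriv ζ (ψ t)) :=
              mul_le_mul_of_nonneg_left (hpos ε hε' _) (by positivity)
            have := hM (ψ t)
            linarith
  have h_diff : ∀ᵐ t ∂(volume : Measure ℝ), t ∈ Set.uIoc (-L/2) (L/2) →
      ∀ ε ∈ Metric.ball (0:ℝ) δ,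
        HasDerivAt (fun ε => K t * Real.log (deriv f (ψ t + ε * ζ (ψ t)) * (1 + ε * deriv ζ (ψ t))))
          (K t * (ζ (ψ t) * (deriv (deriv f) (ψ t + ε * ζ (ψ t))
            / deriv f (ψ t + ε * ζ (ψ t))) + deriv ζ (ψ t) / (1 + ε * deriv ζ (ψ t)))) ε := by
    apply Filter.Eventually.of_forall
    intro t _ ε hε
    have hε' : |ε| < δ := by simpa [Real.dist_eq] using hε
    have hb : 0 < 1 + ε * deriv ζ (ψ t) := hbpos ε hε' _
    set u := ψ t
    have inner1 : HasDerivAt (fun e : ℝ => u + e * ζ u) (ζ u) ε := by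
      simpa using (hasDerivAt_mul_const (ζ u)).const_add u
    have h1 : HasDerivAt (fun e : ℝ => deriv f (u + e * ζ u))
        (deriv (deriv f) (u + ε * ζ u) * ζ u) ε :=
      (hDp1 _).hasDerivAt.comp ε inner1
    have h2 : HasDerivAt (fun e : ℝ => 1 + e * deriv ζ u) (deriv ζ u) ε := by
      simpa using (hasDerivAt_mul_const (deriv ζ u)).const_add 1
    have hprod := h1.mul h2
    have ha : 0 < deriv f (u + ε * ζ u) := hf' _
    have hlog : HasDerivAt (fun e => K t * Real.log (deriv f (u + e * ζ u) * (1 + e * deriv ζ u))) _ ε := (hprod.log (ne_of_gt (mul_pos ha hb))).const_mul (K t)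
    convert hlog using 1
    have hane : deriv f (u + ε * ζ u) ≠ 0 := ne_of_gt ha
    have hbne : (1 + ε * deriv ζ u) ≠ 0 := ne_of_gt hb
    show K t * _ = K t * (_ / (deriv f (u + ε * ζ u) * (1 + ε * deriv ζ u)))
    rw [add_div, mul_div_mul_right _ _ hbne, mul_div_mul_left _ _ hane]
    ring
  have key := intervalIntegral.hasDerivAt_integral_of_dominated_loc_of_deriv_le
    (μ := volume) (a := -L/2) (b := L/2) (x₀ := (0:ℝ))
    (F := fun ε x => K x * Real.log (deriv f (ψ x + ε * ζ (ψ x)) * (1 + ε * deriv ζ (ψ x))))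
    (F' := fun ε x => K x * (ζ (ψ x) * (deriv (deriv f) (ψ x + ε * ζ (ψ x))
        / deriv f (ψ x + ε * ζ (ψ x))) + deriv ζ (ψ x) / (1 + ε * deriv ζ (ψ x))))
    (bound := fun _ => CK * (Cz * CR + M * (M+1))) (Metric.ball_mem_nhds 0 δpos)
    hF_meas hF_int hF'_meas h_bound intervalIntegrable_const h_diff
  -- ## Conclude: compute the derivative
  have hfun : (fun ε => bottCocycle L (f ∘ g ε) ψ)
      = fun ε => (1/2) * ∫ x in (-L/2)..(L/2),
          K x * Real.log (deriv f (ψ x + ε * ζ (ψ x)) * (1 + ε * deriv ζ (ψ x))) :=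
    funext hBF
  rw [hfun, (key.2.const_mul (1/2 : ℝ)).deriv]
  congr 1
  -- ## The remaining integral identities
  set G : ℝ → ℝ := fun s => -(deriv (deriv f) s / (deriv f s)^2)
    * (ζ s * (deriv (deriv f) s / deriv f s) + deriv ζ s) with hGdef
  have hGcont : Continuous G := by
    apply Continuous.mul
    · exact (hp2c.div (hp1c.pow 2) (fun x => pow_ne_zero _ (ne_of_gt (hf' _)))).neg
    · exact (hζc.mul (hp2c.div hp1c (fun x => ne_of_gt (hf' x)))).add hz1c
  set a : ℝ := ψ (-L/2) with hadef
  have hfa : f a = -L/2 := hfψ _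
  have hfaL : f (a + L) = L/2 := by rw [hfper, hfa]; ring
  -- step 1 : integrand at 0 equals G ∘ ψ
  have step1 : (∫ x in (-L/2)..(L/2), K x * (ζ (ψ x) * (deriv (deriv f) (ψ x + 0 * ζ (ψ x))
        / deriv f (ψ x + 0 * ζ (ψ x))) + deriv ζ (ψ x) / (1 + 0 * deriv ζ (ψ x))))
      = ∫ x in (-L/2)..(L/2), (G ∘ ψ) x := by
    apply intervalIntegral.integral_congr
    intro x _
    simp only [hKdef, hGdef, Function.comp, zero_mul, add_zero, mul_one, div_one]
  -- step 2 : change of variables x = f t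
  have step2 : (∫ x in (-L/2)..(L/2), (G ∘ ψ) x)
      = ∫ t in a..(a+L), deriv f t * G t := by
    rw [← hfa, ← hfaL]
    rw [← intervalIntegral.integral_comp_smul_deriv
      (f := f) (f' := deriv f) (g := G ∘ ψ)
      (fun x _ => (hDf x).hasDerivAt) hp1c.continuousOn (hGcont.comp hψcont)]
    apply intervalIntegral.integral_congr
    intro t _
    simp only [smul_eq_mul, Function.comp]
    rw [hψf]
  -- IBP data
  set uu : ℝ → ℝ := fun s => -(deriv (deriv f) s / deriv f s) with huudef
  set uu' : ℝ → ℝ := fun s =>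
    -(deriv (deriv (deriv f)) s / deriv f s - (deriv (deriv f) s / deriv f s)^2) with huu'def
  have huu : ∀ s, HasDerivAt uu (uu' s) s := by
    intro s
    have hdiv : HasDerivAt (fun y => deriv (deriv f) y / deriv f y)
        ((deriv (deriv (deriv f)) s * deriv f s - deriv (deriv f) s * deriv (deriv f) s)
          / (deriv f s)^2) s :=
      (hDp2 s).hasDerivAt.div (hDp1 s).hasDerivAt (ne_of_gt (hf' s))
    have : HasDerivAt (fun y => -(deriv (deriv f) y / deriv f y)) _ s := hdiv.neg
    convert this using 1
    have hne : deriv f s ≠ 0 := ne_of_gt (hf' s)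
    rw [huu'def]
    field_simp
  have huu'cont : Continuous uu' := by
    apply Continuous.neg
    exact (hp3c.div hp1c (fun x => ne_of_gt (hf' x))).sub
      ((hp2c.div hp1c (fun x => ne_of_gt (hf' x))).pow 2)
  have huucont : Continuous uu := (hp2c.div hp1c (fun x => ne_of_gt (hf' x))).neg
  have ibp : (∫ t in a..(a+L), (uu' t * ζ t + uu t * deriv ζ t)) = 0 := by
    rw [intervalIntegral.integral_deriv_mul_eq_sub (u := uu) (v := ζ) (u' := uu') (v' := deriv ζ)
      (fun x _ => huu x) (fun x _ => (hDζ x).hasDerivAt)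
      (huu'cont.intervalIntegrable _ _) (hz1c.intervalIntegrable _ _)]
    rw [huudef]
    simp only [hζper, hp1per, hp2per]
    ring
  -- step 3 : pointwise identity and IBP
  set T : ℝ → ℝ := fun t => ζ t * (deriv (deriv (deriv f)) t / deriv f t
    - 2 * (deriv (deriv f) t / deriv f t) ^ 2) with hTdef
  have hTcont : Continuous T :=
    hζc.mul ((hp3c.div hp1c (fun x => ne_of_gt (hf' x))).sub
      (continuous_const.mul ((hp2c.div hp1c (fun x => ne_of_gt (hf' x))).pow 2)))
  have step3 : (∫ t in a..(a+L), deriv f t * G t)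
      = ∫ t in a..(a+L), T t := by
    have hpt : ∀ t, deriv f t * G t = T t + (uu' t * ζ t + uu t * deriv ζ t) := by
      intro t
      have hne : deriv f t ≠ 0 := ne_of_gt (hf' t)
      rw [hGdef, hTdef, huudef, huu'def]
      field_simp
      ring
    calc (∫ t in a..(a+L), deriv f t * G t)
        = ∫ t in a..(a+L), (T t + (uu' t * ζ t + uu t * deriv ζ t)) :=
          intervalIntegral.integral_congr (fun t _ => hpt t)
      _ = (∫ t in a..(a+L), T t) + ∫ t in a..(a+L), (uu' t * ζ t + uu t * deriv ζ t) :=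
          intervalIntegral.integral_add (hTcont.intervalIntegrable _ _)
            (((huu'cont.mul hζc).add (huucont.mul hz1c)).intervalIntegrable _ _)
      _ = ∫ t in a..(a+L), T t := by rw [ibp, add_zero]
  -- step 4 : shift the period interval
  have hTper : Function.Periodic T L := by
    intro t
    rw [hTdef]
    simp only [hζper, hp1per, hp2per, hp3per]
  have step4 : (∫ t in a..(a+L), T t) = ∫ t in (-L/2)..(L/2), T t := by
    have := hTper.intervalIntegral_add_eq a (-L/2)
    rw [this]
    have h2 : -L/2 + L = L/2 := by ring
    rw [h2]
  rw [step1, step2, step3, step4]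
end

section
/- Let v : ℝ → ℝ be smooth, L-periodic, positive, with f(x) = ∫_0^x v₀/v dx' and x̃_t^±(x) = f⁻¹(f(x) ± v₀ t). Suppose classical fields E(x,t) and J(x,t) are defined by E(x,t) = Σ_{r=±} [v(x̃_t^{-r}(x))² T_r(x̃_t^{-r}(x)) + S(x̃_t^{-r}(x))/2 − S(x)/2]/v(x) and J(x,t) = Σ_{r=±} r [v(x̃_t^{-r}(x))² T_r(x̃_t^{-r}(x)) + S(x̃_t^{-r}(x))/2], where T_± and S are arbitrary smooth L-periodic functions. Then E and J satisfy the continuity equations ∂_t E(x,t) + ∂_x J(x,t) = 0 and ∂_t J(x,t) + v(x)∂_x[v(x)E(x,t) + S(x)] = 0. -/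
open MeasureTheory intervalIntegral

theorem stmt18
    (L v₀ : ℝ) (hL : 0 < L) (v : ℝ → ℝ)
    (hv : ContDiff ℝ (⊤ : ℕ∞) v)
    (hper : ∀ x, v (x + L) = v x)
    (hpos : ∀ x, 0 < v x)
    (hv₀ : 0 < v₀)
    (hv₀def : 1 / v₀ = (1 / L) * ∫ x in (-L/2)..(L/2), 1 / v x)
    (f : ℝ → ℝ)
    (hf : ∀ x, f x = ∫ t in (0:ℝ)..x, v₀ / v t)
    -- `X ε t x = x̃_t^ε(x) = f⁻¹(f(x) + ε v₀ t)` for `ε = ±1`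
    (X : ℝ → ℝ → ℝ → ℝ)
    (hX : ∀ ε t x, X ε t x = Function.invFun f (f x + ε * v₀ * t))
    -- arbitrary smooth `L`-periodic fields `T₊, T₋, S`
    (Tp Tm S : ℝ → ℝ)
    (hTp : ContDiff ℝ (⊤ : ℕ∞) Tp) (hTm : ContDiff ℝ (⊤ : ℕ∞) Tm) (hS : ContDiff ℝ (⊤ : ℕ∞) S)
    (hTpper : ∀ x, Tp (x + L) = Tp x) (hTmper : ∀ x, Tm (x + L) = Tm x)
    (hSper : ∀ x, S (x + L) = S x)
    (E J : ℝ → ℝ → ℝ)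
    -- `E(x,t) = Σ_{r=±} [v(x̃^{-r})² T_r(x̃^{-r}) + S(x̃^{-r})/2 − S(x)/2]/v(x)`
    (hE : ∀ x t, E x t =
      ((v (X (-1) t x) ^ 2 * Tp (X (-1) t x) + S (X (-1) t x) / 2 - S x / 2)
        + (v (X 1 t x) ^ 2 * Tm (X 1 t x) + S (X 1 t x) / 2 - S x / 2)) / v x)
    -- `J(x,t) = Σ_{r=±} r [v(x̃^{-r})² T_r(x̃^{-r}) + S(x̃^{-r})/2]`
    (hJ : ∀ x t, J x t =
      (v (X (-1) t x) ^ 2 * Tp (X (-1) t x) + S (X (-1) t x) / 2)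
        - (v (X 1 t x) ^ 2 * Tm (X 1 t x) + S (X 1 t x) / 2)) :
    (∀ x t, deriv (fun t' => E x t') t + deriv (fun x' => J x' t) x = 0) ∧
    (∀ x t, deriv (fun t' => J x t') t
        + v x * deriv (fun x' => v x' * E x' t + S x') x = 0) := by

  classical
  have hv0 : ∀ x, v x ≠ 0 := fun x => (hpos x).ne'
  have hv₀ne : v₀ ≠ 0 := hv₀.ne'
  have hfc : Continuous fun y => v₀ / v y := continuous_const.div hv.continuous hv0
  have hf' : ∀ x, HasDerivAt f (v₀ / v x) x := by
    intro x
    have h1 : HasDerivAt (fun u => ∫ t in (0:ℝ)..u, v₀ / v t) (v₀ / v x) x :=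
      (hfc.integral_hasStrictDerivAt 0 x).hasDerivAt
    exact h1.congr_of_eventuallyEq (Filter.Eventually.of_forall fun y => (hf y))
  have hfcont : Continuous f := by
    have : Differentiable ℝ f := fun x => (hf' x).differentiableAt
    exact this.continuous
  have hmono : StrictMono f := by
    apply strictMono_of_deriv_pos
    intro x
    rw [(hf' x).deriv]
    exact div_pos hv₀ (hpos x)
  -- periodicity of f increments
  have hperInt : Function.Periodic (fun y => v₀ / v y) L := fun x => by
    simp [hper x]
  have hfL : ∀ x, f (x + L) = f x + f L := by
    intro x
    have hint : ∀ a b : ℝ, IntervalIntegrable (fun y => v₀ / v y) volume a b :=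
      fun a b => hfc.intervalIntegrable a b
    have hsplit : f (x + L) = f x + ∫ t in x..(x + L), v₀ / v t := by
      rw [hf, hf, ← intervalIntegral.integral_add_adjacent_intervals (hint 0 x) (hint x (x + L))]
    have hkey : (∫ t in x..(x + L), v₀ / v t) = f L := by
      rw [hf]
      simpa using hperInt.intervalIntegral_add_eq x 0
    rw [hsplit, hkey]
  have hfLpos : 0 < f L := by
    rw [hf]
    exact intervalIntegral.intervalIntegral_pos_of_pos_on (hfc.intervalIntegrable 0 L)
      (fun x _ => div_pos hv₀ (hpos x)) hL
  have hnL : ∀ n : ℕ, f ((n : ℝ) * L) = (n : ℝ) * f L := by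
    intro n
    induction n with
    | zero => simp [hf]
    | succ n ih =>
      push_cast
      rw [add_mul, one_mul, hfL, ih, add_mul, one_mul]
  have hnLneg : ∀ n : ℕ, f (-((n : ℝ) * L)) = -((n : ℝ) * f L) := by
    intro n
    induction n with
    | zero => simp [hf]
    | succ n ih =>
      have := hfL (-(((n : ℝ) + 1) * L))
      have h2 : -(((n : ℝ) + 1) * L) + L = -((n : ℝ) * L) := by ring
      rw [h2] at this
      push_cast
      push_cast at ih this
      linarith
  have htop : Filter.Tendsto f Filter.atTop Filter.atTop := by
    apply Filter.tendsto_atTop_atTop_of_monotone hmono.monotone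
    intro b
    obtain ⟨n, hn⟩ := exists_nat_ge (b / f L)
    refine ⟨(n : ℝ) * L, ?_⟩
    rw [hnL]
    exact (div_le_iff₀ hfLpos).mp hn
  have hbot : Filter.Tendsto f Filter.atBot Filter.atBot := by
    apply Filter.tendsto_atBot_atBot_of_monotone hmono.monotone
    intro b
    obtain ⟨n, hn⟩ := exists_nat_ge (-b / f L)
    refine ⟨-((n : ℝ) * L), ?_⟩
    rw [hnLneg]
    have : -b ≤ (n : ℝ) * f L := (div_le_iff₀ hfLpos).mp hn
    linarith
  have hsurj : Function.Surjective f := hfcont.surjective htop hbot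
  set g := Function.invFun f with hgdef
  have hfg : ∀ y, f (g y) = y := fun y => Function.rightInverse_invFun hsurj y
  have hgcont : Continuous g := by
    have he : g = ⇑(StrictMono.orderIsoOfSurjective f hmono hsurj).symm := by
      funext y
      apply hmono.injective
      rw [hfg]
      have := (StrictMono.orderIsoOfSurjective f hmono hsurj).apply_symm_apply y
      rw [StrictMono.coe_orderIsoOfSurjective] at this
      exact this.symm
    rw [he]
    exact OrderIso.continuous _
  have hg' : ∀ y, HasDerivAt g (v (g y) / v₀) y := by
    intro y
    have h1 : HasDerivAt f (v₀ / v (g y)) (g y) := hf' (g y)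
    have h2 : v₀ / v (g y) ≠ 0 := div_ne_zero hv₀ne (hv0 _)
    have h3 := HasDerivAt.of_local_left_inverse hgcont.continuousAt h1 h2
      (Filter.Eventually.of_forall hfg)
    rwa [inv_div] at h3
  have hXg : ∀ ε t x, X ε t x = g (f x + ε * v₀ * t) := fun ε t x => hX ε t x
  -- helper chain rules
  have haffT : ∀ (x c t : ℝ),
      HasDerivAt (fun t' : ℝ => g (f x + c * t')) (v (g (f x + c * t)) / v₀ * c) t := by
    intro x c t
    have h1 : HasDerivAt (fun t' : ℝ => f x + c * t') c t := by
      simpa using ((hasDerivAt_id t).const_mul c).const_add (f x)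
    exact (hg' (f x + c * t)).comp t h1
  have haffX : ∀ (c x : ℝ),
      HasDerivAt (fun x' : ℝ => g (f x' + c)) (v (g (f x + c)) / v₀ * (v₀ / v x)) x := by
    intro c x
    exact (hg' (f x + c)).comp x ((hf' x).add_const c)
  -- the chiral fields
  set Fp : ℝ → ℝ := fun y => v y ^ 2 * Tp y + S y / 2 with hFpdef
  set Fm : ℝ → ℝ := fun y => v y ^ 2 * Tm y + S y / 2 with hFmdef
  have hFps : ContDiff ℝ (⊤ : ℕ∞) Fp := ((hv.pow 2).mul hTp).add (hS.div_const 2)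
  have hFms : ContDiff ℝ (⊤ : ℕ∞) Fm := ((hv.pow 2).mul hTm).add (hS.div_const 2)
  have hFp' : ∀ y, HasDerivAt Fp (deriv Fp y) y :=
    fun y => (hFps.differentiable (by simp) y).hasDerivAt
  have hFm' : ∀ y, HasDerivAt Fm (deriv Fm y) y :=
    fun y => (hFms.differentiable (by simp) y).hasDerivAt
  constructor
  · intro x t
    have hvx := hv0 x
    have hEfun : (fun t' => E x t')
        = fun t' => (Fp (g (f x + -1 * v₀ * t')) + Fm (g (f x + 1 * v₀ * t')) - S x) / v x := by
      funext t'
      rw [hE, hXg, hXg, hFpdef, hFmdef]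
      ring
    have hE' : HasDerivAt (fun t' => E x t')
        ((deriv Fp (g (f x + -1 * v₀ * t)) * (v (g (f x + -1 * v₀ * t)) / v₀ * (-1 * v₀))
          + deriv Fm (g (f x + 1 * v₀ * t)) * (v (g (f x + 1 * v₀ * t)) / v₀ * (1 * v₀))) / v x) t := by
      rw [hEfun]
      have h1 : HasDerivAt (fun t' : ℝ => Fp (g (f x + -1 * v₀ * t')))
          (deriv Fp (g (f x + -1 * v₀ * t)) * (v (g (f x + -1 * v₀ * t)) / v₀ * (-1 * v₀))) t := by
        exact (hFp' (g (f x + -1 * v₀ * t))).comp t (haffT x (-1 * v₀) t)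
      have h2 : HasDerivAt (fun t' : ℝ => Fm (g (f x + 1 * v₀ * t')))
          (deriv Fm (g (f x + 1 * v₀ * t)) * (v (g (f x + 1 * v₀ * t)) / v₀ * (1 * v₀))) t := by
        exact (hFm' (g (f x + 1 * v₀ * t))).comp t (haffT x (1 * v₀) t)
      exact (((h1.add h2).sub_const (S x)).div_const (v x))
    have hJfun : (fun x' => J x' t)
        = fun x' => Fp (g (f x' + -1 * v₀ * t)) - Fm (g (f x' + 1 * v₀ * t)) := by
      funext x'
      rw [hJ, hXg, hXg, hFpdef, hFmdef]
    have hJ' : HasDerivAt (fun x' => J x' t)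
        (deriv Fp (g (f x + -1 * v₀ * t)) * (v (g (f x + -1 * v₀ * t)) / v₀ * (v₀ / v x))
          - deriv Fm (g (f x + 1 * v₀ * t)) * (v (g (f x + 1 * v₀ * t)) / v₀ * (v₀ / v x))) x := by
      rw [hJfun]
      have h1 : HasDerivAt (fun x' : ℝ => Fp (g (f x' + -1 * v₀ * t)))
          (deriv Fp (g (f x + -1 * v₀ * t)) * (v (g (f x + -1 * v₀ * t)) / v₀ * (v₀ / v x))) x := by
        exact (hFp' (g (f x + -1 * v₀ * t))).comp x (haffX (-1 * v₀ * t) x)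
      have h2 : HasDerivAt (fun x' : ℝ => Fm (g (f x' + 1 * v₀ * t)))
          (deriv Fm (g (f x + 1 * v₀ * t)) * (v (g (f x + 1 * v₀ * t)) / v₀ * (v₀ / v x))) x := by
        exact (hFm' (g (f x + 1 * v₀ * t))).comp x (haffX (1 * v₀ * t) x)
      exact h1.sub h2
    rw [hE'.deriv, hJ'.deriv]
    field_simp
    ring
  · intro x t
    have hvx := hv0 x
    have hJfun : (fun t' => J x t')
        = fun t' => Fp (g (f x + -1 * v₀ * t')) - Fm (g (f x + 1 * v₀ * t')) := by
      funext t'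
      rw [hJ, hXg, hXg, hFpdef, hFmdef]
    have hJ' : HasDerivAt (fun t' => J x t')
        (deriv Fp (g (f x + -1 * v₀ * t)) * (v (g (f x + -1 * v₀ * t)) / v₀ * (-1 * v₀))
          - deriv Fm (g (f x + 1 * v₀ * t)) * (v (g (f x + 1 * v₀ * t)) / v₀ * (1 * v₀))) t := by
      rw [hJfun]
      have h1 : HasDerivAt (fun t' : ℝ => Fp (g (f x + -1 * v₀ * t')))
          (deriv Fp (g (f x + -1 * v₀ * t)) * (v (g (f x + -1 * v₀ * t)) / v₀ * (-1 * v₀))) t := by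
        exact (hFp' (g (f x + -1 * v₀ * t))).comp t (haffT x (-1 * v₀) t)
      have h2 : HasDerivAt (fun t' : ℝ => Fm (g (f x + 1 * v₀ * t')))
          (deriv Fm (g (f x + 1 * v₀ * t)) * (v (g (f x + 1 * v₀ * t)) / v₀ * (1 * v₀))) t := by
        exact (hFm' (g (f x + 1 * v₀ * t))).comp t (haffT x (1 * v₀) t)
      exact h1.sub h2
    have hKfun : (fun x' => v x' * E x' t + S x')
        = fun x' => Fp (g (f x' + -1 * v₀ * t)) + Fm (g (f x' + 1 * v₀ * t)) := by
      funext x'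
      rw [hE, hXg, hXg, hFpdef, hFmdef]
      field_simp [hv0 x']
      ring
    have hK' : HasDerivAt (fun x' => v x' * E x' t + S x')
        (deriv Fp (g (f x + -1 * v₀ * t)) * (v (g (f x + -1 * v₀ * t)) / v₀ * (v₀ / v x))
          + deriv Fm (g (f x + 1 * v₀ * t)) * (v (g (f x + 1 * v₀ * t)) / v₀ * (v₀ / v x))) x := by
      rw [hKfun]
      have h1 : HasDerivAt (fun x' : ℝ => Fp (g (f x' + -1 * v₀ * t)))
          (deriv Fp (g (f x + -1 * v₀ * t)) * (v (g (f x + -1 * v₀ * t)) / v₀ * (v₀ / v x))) x := by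
        exact (hFp' (g (f x + -1 * v₀ * t))).comp x (haffX (-1 * v₀ * t) x)
      have h2 : HasDerivAt (fun x' : ℝ => Fm (g (f x' + 1 * v₀ * t)))
          (deriv Fm (g (f x + 1 * v₀ * t)) * (v (g (f x + 1 * v₀ * t)) / v₀ * (v₀ / v x))) x := by
        exact (hFm' (g (f x + 1 * v₀ * t))).comp x (haffX (1 * v₀ * t) x)
      exact h1.add h2
    rw [hJ'.deriv, hK'.deriv]
    field_simp
    ring
end

section
/- Let v : ℝ → ℝ be smooth, L-periodic, positive, with f(x) = ∫_0^x v₀/v dx' and x̃_t^±(x) = f⁻¹(f(x) ± v₀t). Suppose ρ(x,t) = Σ_{r=±} [v(x̃_t^{-r}(x))/v(x)] J_r(x̃_t^{-r}(x)) and j(x,t) = Σ_{r=±} r · v(x̃_t^{-r}(x)) J_r(x̃_t^{-r}(x)), where J_± are arbitrary smooth L-periodic functions. Then ∂_t ρ(x,t) + ∂_x j(x,t) = 0 and ∂_t j(x,t) + v(x)∂_x[v(x)ρ(x,t)] = 0. -/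
open MeasureTheory intervalIntegral

theorem stmt19
    (L v₀ : ℝ) (hL : 0 < L) (v : ℝ → ℝ)
    (hv : ContDiff ℝ (⊤ : ℕ∞) v)
    (hper : ∀ x, v (x + L) = v x)
    (hpos : ∀ x, 0 < v x)
    (hv₀ : 0 < v₀)
    (hv₀def : 1 / v₀ = (1 / L) * ∫ x in (-L/2)..(L/2), 1 / v x)
    (f : ℝ → ℝ)
    (hf : ∀ x, f x = ∫ t in (0:ℝ)..x, v₀ / v t)
    -- `X ε t x = x̃_t^ε(x) = f⁻¹(f(x) + ε v₀ t)` for `ε = ±1`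
    (X : ℝ → ℝ → ℝ → ℝ)
    (hX : ∀ ε t x, X ε t x = Function.invFun f (f x + ε * v₀ * t))
    -- arbitrary smooth `L`-periodic fields `J₊, J₋`
    (Jp Jm : ℝ → ℝ)
    (hJp : ContDiff ℝ (⊤ : ℕ∞) Jp) (hJm : ContDiff ℝ (⊤ : ℕ∞) Jm)
    (hJpper : ∀ x, Jp (x + L) = Jp x) (hJmper : ∀ x, Jm (x + L) = Jm x)
    (ρ j : ℝ → ℝ → ℝ)
    -- `ρ(x,t) = Σ_{r=±} [v(x̃^{-r})/v(x)] J_r(x̃^{-r})`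
    (hρ : ∀ x t, ρ x t =
      (v (X (-1) t x) / v x) * Jp (X (-1) t x) + (v (X 1 t x) / v x) * Jm (X 1 t x))
    -- `j(x,t) = Σ_{r=±} r · v(x̃^{-r}) J_r(x̃^{-r})`
    (hj : ∀ x t, j x t =
      v (X (-1) t x) * Jp (X (-1) t x) - v (X 1 t x) * Jm (X 1 t x)) :
    (∀ x t, deriv (fun t' => ρ x t') t + deriv (fun x' => j x' t) x = 0) ∧
    (∀ x t, deriv (fun t' => j x t') t
        + v x * deriv (fun x' => v x' * ρ x' t) x = 0) := by
  have hvne : ∀ x, v x ≠ 0 := fun x => (hpos x).ne'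
  have hv₀ne : v₀ ≠ 0 := hv₀.ne'
  have hcont : Continuous fun t => v₀ / v t := continuous_const.div hv.continuous hvne
  have hffun : f = fun x => ∫ t in (0:ℝ)..x, v₀ / v t := funext hf
  have hfderiv : ∀ x, HasDerivAt f (v₀ / v x) x := by
    intro x; rw [hffun]; exact (hcont.integral_hasStrictDerivAt 0 x).hasDerivAt
  have hfpos : ∀ x, 0 < v₀ / v x := fun x => div_pos hv₀ (hpos x)
  have hmono : StrictMono f := by
    apply strictMono_of_deriv_pos
    intro x; rw [(hfderiv x).deriv]; exact hfpos x
  have hfc : Continuous f := by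
    rw [continuous_iff_continuousAt]; exact fun x => (hfderiv x).continuousAt
  have hint : ∀ a b, IntervalIntegrable (fun t => v₀ / v t) volume a b :=
    fun a b => hcont.intervalIntegrable a b
  have hperiodic : Function.Periodic (fun t => v₀ / v t) L := fun x => by simp [hper x]
  have hsurj : Function.Surjective f := by
    apply hfc.surjective
    · rw [hffun]; exact hperiodic.tendsto_atTop_intervalIntegral_of_pos' (hint 0 L) hfpos hL
    · rw [hffun]; exact hperiodic.tendsto_atBot_intervalIntegral_of_pos' (hint 0 L) hfpos hL
  set g := Function.invFun f with hgdef
  have hfg : ∀ y, f (g y) = y := fun y => Function.invFun_eq (hsurj y)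
  have hgc : Continuous g := by
    have : g = fun y => (StrictMono.orderIsoOfSurjective f hmono hsurj).symm y := by
      funext y
      apply hmono.injective
      rw [hfg]
      exact (StrictMono.orderIsoOfSurjective_self_symm_apply f hmono hsurj y).symm
    rw [this]
    exact OrderIso.continuous _
  have hgderiv : ∀ y, HasDerivAt g (v (g y) / v₀) y := by
    intro y
    have h1 : HasDerivAt g ((v₀ / v (g y))⁻¹) y :=
      HasDerivAt.of_local_left_inverse hgc.continuousAt (hfderiv (g y)) (hfpos _).ne'
        (Filter.Eventually.of_forall hfg)
    rwa [inv_div] at h1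
  -- derivatives of the characteristics
  have hXt : ∀ ε t x, HasDerivAt (fun t' => X ε t' x) (ε * v (X ε t x)) t := by
    intro ε t x
    have inner : HasDerivAt (fun t' : ℝ => f x + ε * v₀ * t') (ε * v₀) t := by
      simpa using ((hasDerivAt_id t).const_mul (ε * v₀)).const_add (f x)
    have h1 := (hgderiv (f x + ε * v₀ * t)).comp t inner
    have h2 : HasDerivAt (fun t' => X ε t' x)
        (v (g (f x + ε * v₀ * t)) / v₀ * (ε * v₀)) t := by
      have : (fun t' => X ε t' x) = (g ∘ fun t' : ℝ => f x + ε * v₀ * t') := by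
        funext t'; simp [hX, Function.comp]
      rw [this]; exact h1
    rw [hX ε t x]
    convert h2 using 1
    field_simp
  have hXx : ∀ ε t x, HasDerivAt (fun x' => X ε t x') (v (X ε t x) / v x) x := by
    intro ε t x
    have inner : HasDerivAt (fun x' : ℝ => f x' + ε * v₀ * t) (v₀ / v x) x :=
      (hfderiv x).add_const _
    have h1 := (hgderiv (f x + ε * v₀ * t)).comp x inner
    have h2 : HasDerivAt (fun x' => X ε t x')
        (v (g (f x + ε * v₀ * t)) / v₀ * (v₀ / v x)) x := by
      have : (fun x' => X ε t x') = (g ∘ fun x' : ℝ => f x' + ε * v₀ * t) := by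
        funext x'; simp [hX, Function.comp]
      rw [this]; exact h1
    rw [hX ε t x]
    convert h2 using 1
    field_simp
  -- the transported fields and their derivatives
  set Ap : ℝ → ℝ := fun y => v y * Jp y with hApdef
  set Am : ℝ → ℝ := fun y => v y * Jm y with hAmdef
  set ap : ℝ → ℝ := fun y => deriv v y * Jp y + v y * deriv Jp y with hapdef
  set am : ℝ → ℝ := fun y => deriv v y * Jm y + v y * deriv Jm y with hamdef
  have hvd : ∀ y, HasDerivAt v (deriv v y) y := fun y => (hv.differentiable (by simp) y).hasDerivAt
  have hAp : ∀ y, HasDerivAt Ap (ap y) y :=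
    fun y => (hvd y).mul (hJp.differentiable (by simp) y).hasDerivAt
  have hAm : ∀ y, HasDerivAt Am (am y) y :=
    fun y => (hvd y).mul (hJm.differentiable (by simp) y).hasDerivAt
  have hFt : ∀ (A a : ℝ → ℝ), (∀ y, HasDerivAt A (a y) y) → ∀ ε t x,
      HasDerivAt (fun t' => A (X ε t' x)) (a (X ε t x) * (ε * v (X ε t x))) t := by
    intro A a hA ε t x
    exact (hA (X ε t x)).comp t (hXt ε t x)
  have hFx : ∀ (A a : ℝ → ℝ), (∀ y, HasDerivAt A (a y) y) → ∀ ε t x,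
      HasDerivAt (fun x' => A (X ε t x')) (a (X ε t x) * (v (X ε t x) / v x)) x := by
    intro A a hA ε t x
    exact (hA (X ε t x)).comp x (hXx ε t x)
  -- rewrite ρ, j, vρ in terms of the transported fields
  have hρfun : ∀ x, (fun t' => ρ x t') = fun t' => (Ap (X (-1) t' x) + Am (X 1 t' x)) / v x := by
    intro x; funext t'; rw [hρ, hApdef, hAmdef]
    field_simp
  have hjfunx : ∀ t, (fun x' => j x' t) = fun x' => Ap (X (-1) t x') - Am (X 1 t x') := by
    intro t; funext x'; rw [hj, hApdef, hAmdef]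
  have hjfunt : ∀ x, (fun t' => j x t') = fun t' => Ap (X (-1) t' x) - Am (X 1 t' x) := by
    intro x; funext t'; rw [hj, hApdef, hAmdef]
  have hvρfun : ∀ t, (fun x' => v x' * ρ x' t) = fun x' => Ap (X (-1) t x') + Am (X 1 t x') := by
    intro t; funext x'; rw [hρ, hApdef, hAmdef]
    rw [mul_add, div_mul_eq_mul_div, div_mul_eq_mul_div, ← mul_div_assoc, ← mul_div_assoc,
      mul_div_cancel_left₀ _ (hvne x'), mul_div_cancel_left₀ _ (hvne x')]
  constructor
  · intro x t
    have dρt : HasDerivAt (fun t' => ρ x t')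
        ((ap (X (-1) t x) * (-1 * v (X (-1) t x)) + am (X 1 t x) * (1 * v (X 1 t x))) / v x) t := by
      rw [hρfun x]
      exact ((hFt Ap ap hAp (-1) t x).add (hFt Am am hAm 1 t x)).div_const (v x)
    have djx : HasDerivAt (fun x' => j x' t)
        (ap (X (-1) t x) * (v (X (-1) t x) / v x) - am (X 1 t x) * (v (X 1 t x) / v x)) x := by
      rw [hjfunx t]
      exact (hFx Ap ap hAp (-1) t x).sub (hFx Am am hAm 1 t x)
    rw [dρt.deriv, djx.deriv]
    field_simp
    ring
  · intro x t
    have djt : HasDerivAt (fun t' => j x t')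
        (ap (X (-1) t x) * (-1 * v (X (-1) t x)) - am (X 1 t x) * (1 * v (X 1 t x))) t := by
      rw [hjfunt x]
      exact (hFt Ap ap hAp (-1) t x).sub (hFt Am am hAm 1 t x)
    have dvρx : HasDerivAt (fun x' => v x' * ρ x' t)
        (ap (X (-1) t x) * (v (X (-1) t x) / v x) + am (X 1 t x) * (v (X 1 t x) / v x)) x := by
      rw [hvρfun t]
      exact (hFx Ap ap hAp (-1) t x).add (hFx Am am hAm 1 t x)
    have key : ∀ a w : ℝ, v x * (a * (w / v x)) = a * w := fun a w => by
      rw [mul_comm (v x), mul_assoc, div_mul_cancel₀ _ (hvne x)]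
    rw [djt.deriv, dvρx.deriv, mul_add, key, key]
    ring
end
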